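/- arXiv:2101.11494 — 3 statements merged into one kernel-verified Lean document; each statement's English description precedes it below -/
import Mathlib

section
/- Let B be a complete Boolean algebra, K a directed partial order, and (P_k)_{k∈K}, (Q_k)_{k∈K} families of complete subalgebras of B such that P_k ⊆ P_ℓ and Q_k ⊆ Q_ℓ whenever k ≤ ℓ, and P_k ⊆ Q_k for every k ∈ K. Assume that projections are correct, i.e., for all k ≤ ℓ in K and every q ∈ Q_k: inf{p ∈ P_ℓ : q ≤ p} = inf{p ∈ P_k : q ≤ p}. Let P = ⋃_{k∈K} P_k and Q = ⋃_{k∈K} Q_k. Then P completely embeds into Q: whenever A ⊆ P \ {⊥} consists of pairwise disjoint elements (a ⊓ a' = ⊥ for distinct a, a' ∈ A) and every nonzero element of P has nonzero meet with some member of A, then also every nonzero element of Q has nonzero meet with some member of A. -/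
/-- A complete subalgebra of a complete Boolean algebra: contains `⊥` and `⊤` and is closed
under complementation and arbitrary suprema and infima as computed in the ambient algebra. -/
def IsCompleteSubalg {B : Type u} [CompleteBooleanAlgebra B] (S : Set B) : Prop :=
  ⊥ ∈ S ∧ ⊤ ∈ S ∧ (∀ x ∈ S, xᶜ ∈ S) ∧ (∀ T ⊆ S, sSup T ∈ S) ∧ (∀ T ⊆ S, sInf T ∈ S)

/-- The projection to a complete subalgebra: `h(q) = inf {p ∈ S : q ≤ p}`. -/
noncomputable def proj {B : Type u} [CompleteBooleanAlgebra B] (S : Set B) (q : B) : B :=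
  sInf {p | p ∈ S ∧ q ≤ p}

/-- Complete embeddability between direct limits, given correctness of
projections. -/
theorem stmt_7 {B : Type u} [CompleteBooleanAlgebra B] {K : Type v} [PartialOrder K]
    (hdir : ∀ k l : K, ∃ m : K, k ≤ m ∧ l ≤ m)
    (P Q : K → Set B)
    (hP : ∀ k, IsCompleteSubalg (P k)) (hQ : ∀ k, IsCompleteSubalg (Q k))
    (hPmono : ∀ k l : K, k ≤ l → P k ⊆ P l) (hQmono : ∀ k l : K, k ≤ l → Q k ⊆ Q l)
    (hPQ : ∀ k, P k ⊆ Q k)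
    (hcorrect : ∀ k l : K, k ≤ l → ∀ q ∈ Q k, proj (P l) q = proj (P k) q)
    (A : Set B) (hAsub : A ⊆ ⋃ k, P k) (hAbot : (⊥ : B) ∉ A)
    (hAdisj : ∀ a ∈ A, ∀ a' ∈ A, a ≠ a' → a ⊓ a' = ⊥)
    (hAmax : ∀ p ∈ ⋃ k, P k, p ≠ ⊥ → ∃ a ∈ A, p ⊓ a ≠ ⊥) :
    ∀ q ∈ ⋃ k, Q k, q ≠ ⊥ → ∃ a ∈ A, q ⊓ a ≠ ⊥ := by
  intro q hq hqne
  obtain ⟨_, ⟨k, rfl⟩, hqk⟩ := hq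
  set p : B := proj (P k) q with hp
  have hpPk : p ∈ P k := (hP k).2.2.2.2 _ (fun x hx => hx.1)
  have hqp : q ≤ p := le_sInf fun x hx => hx.2
  have hpne : p ≠ ⊥ := fun h => hqne (le_bot_iff.mp (h ▸ hqp))
  obtain ⟨a, haA, hpa⟩ := hAmax p (Set.mem_iUnion.mpr ⟨k, hpPk⟩) hpne
  refine ⟨a, haA, fun hcon => hpa ?_⟩
  obtain ⟨_, ⟨m, rfl⟩, haPm⟩ := hAsub haA
  obtain ⟨n, hkn, hmn⟩ := hdir k m
  have hacn : aᶜ ∈ P n := (hP n).2.2.1 _ (hPmono m n hmn haPm)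
  have hqac : q ≤ aᶜ := le_compl_iff_disjoint_right.mpr (disjoint_iff.mpr hcon)
  have h1 : proj (P n) q ≤ aᶜ := sInf_le ⟨hacn, hqac⟩
  rw [hcorrect k n hkn q hqk] at h1
  exact disjoint_iff.mp (le_compl_iff_disjoint_right.mp h1)
end

section
/- Let B be a complete Boolean algebra and let P_{0∧1}, P_0, P_1 be complete subalgebras of B with P_{0∧1} ⊆ P_0 and P_{0∧1} ⊆ P_1. Then the following are equivalent: (i) for all p_0 ∈ P_0, h^B_{P_1}(p_0) = h^{P_0}_{P_{0∧1}}(p_0); (ii) for all p_1 ∈ P_1, h^B_{P_0}(p_1) = h^{P_1}_{P_{0∧1}}(p_1); (iii) whenever p_0 ∈ P_0 and p_1 ∈ P_1 are nonzero and h^{P_0}_{P_{0∧1}}(p_0) = h^{P_1}_{P_{0∧1}}(p_1), then p_0 ⊓ p_1 ≠ ⊥ (p_0 and p_1 are compatible in B). (When these hold one says that projections in the diagram ⟨P_{0∧1}, P_0, P_1, B⟩ are correct.) -/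
section Helpers

variable {B : Type u} [CompleteBooleanAlgebra B] {S : Set B}

theorem le_proj (q : B) : q ≤ proj S q :=
  le_sInf fun _ hp => hp.2

theorem proj_le {p : B} (hp : p ∈ S) (hq : (q : B) ≤ p) : proj S q ≤ p :=
  sInf_le ⟨hp, hq⟩

theorem proj_mem (hS : IsCompleteSubalg S) (q : B) : proj S q ∈ S :=
  hS.2.2.2.2 _ fun _ hp => hp.1

theorem proj_mono {q q' : B} (hS : IsCompleteSubalg S) (h : q ≤ q') :
    proj S q ≤ proj S q' :=
  proj_le (proj_mem hS q') (h.trans (le_proj q'))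

theorem proj_of_mem {p : B} (hp : p ∈ S) : proj S p = p :=
  le_antisymm (proj_le hp le_rfl) (le_proj p)

theorem inf_mem (hS : IsCompleteSubalg S) {a b : B} (ha : a ∈ S) (hb : b ∈ S) :
    a ⊓ b ∈ S := by
  have := hS.2.2.2.2 {a, b} (by intro x hx; rcases hx with rfl | rfl <;> assumption)
  rwa [sInf_pair] at this

theorem sup_mem (hS : IsCompleteSubalg S) {a b : B} (ha : a ∈ S) (hb : b ∈ S) :
    a ⊔ b ∈ S := by
  have := hS.2.2.2.1 {a, b} (by intro x hx; rcases hx with rfl | rfl <;> assumption)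
  rwa [sSup_pair] at this

theorem inf_proj_eq_bot (hS : IsCompleteSubalg S) {p q : B} (hp : p ∈ S)
    (h : p ⊓ q = ⊥) : p ⊓ proj S q = ⊥ := by
  have hq : q ≤ pᶜ := by
    have : q = (q ⊓ p) ⊔ (q ⊓ pᶜ) := by
      rw [← inf_sup_left, sup_compl_eq_top, inf_top_eq]
    rw [this, inf_comm q p, h, bot_sup_eq]
    exact inf_le_right
  have h2 : proj S q ≤ pᶜ := proj_le (hS.2.2.1 p hp) hq
  exact le_bot_iff.mp (le_trans (inf_le_inf_left p h2) (by rw [inf_compl_eq_bot]))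

theorem proj_inf (hS : IsCompleteSubalg S) {p : B} (hp : p ∈ S) (q : B) :
    proj S (p ⊓ q) = p ⊓ proj S q := by
  apply le_antisymm
  · exact le_inf (proj_le hp inf_le_left) (proj_mono hS inf_le_right)
  · apply le_sInf
    rintro r ⟨hr, hler⟩
    have hmem : r ⊔ pᶜ ∈ S := sup_mem hS hr (hS.2.2.1 p hp)
    have hle : q ≤ r ⊔ pᶜ := by
      have : q = (q ⊓ p) ⊔ (q ⊓ pᶜ) := by
        rw [← inf_sup_left, sup_compl_eq_top, inf_top_eq]
      rw [this]
      exact sup_le_sup (by rw [inf_comm] at hler; exact hler) inf_le_right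
    have : proj S q ≤ r ⊔ pᶜ := proj_le hmem hle
    calc p ⊓ proj S q ≤ p ⊓ (r ⊔ pᶜ) := inf_le_inf_left p this
      _ ≤ r := by rw [inf_sup_left, inf_compl_eq_bot, sup_bot_eq]; exact inf_le_right

theorem proj_subset {T : Set B} (hST : S ⊆ T) (q : B) : proj T q ≤ proj S q :=
  sInf_le_sInf fun p hp => ⟨hST hp.1, hp.2⟩

/-- Key lemma: (i) ↔ (iii). -/
theorem key_lemma {P01 P0 P1 : Set B}
    (h01 : IsCompleteSubalg P01) (h0 : IsCompleteSubalg P0) (h1 : IsCompleteSubalg P1)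
    (hsub0 : P01 ⊆ P0) (hsub1 : P01 ⊆ P1) :
    (∀ p0 ∈ P0, proj P1 p0 = proj P01 p0) ↔
      (∀ p0 ∈ P0, ∀ p1 ∈ P1, p0 ≠ ⊥ → p1 ≠ ⊥ →
        proj P01 p0 = proj P01 p1 → p0 ⊓ p1 ≠ ⊥) := by
  constructor
  · intro hi p0 hp0 p1 hp1 hne0 hne1 hproj hbot
    have h2 : p1 ⊓ proj P1 p0 = ⊥ := inf_proj_eq_bot h1 hp1 (by rw [inf_comm]; exact hbot)
    rw [hi p0 hp0, hproj] at h2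
    have : p1 ≤ proj P01 p1 := le_proj p1
    exact hne1 (le_bot_iff.mp (by rw [← h2]; exact le_inf le_rfl this))
  · intro hiii p0 hp0
    apply le_antisymm (proj_subset hsub1 p0)
    by_contra hcon
    set q1 := proj P1 p0 with hq1
    set p1 := proj P01 p0 ⊓ q1ᶜ with hp1def
    have hp1mem : p1 ∈ P1 :=
      inf_mem h1 (hsub1 (proj_mem h01 p0)) (h1.2.2.1 _ (proj_mem h1 p0))
    have hp1le : p1 ≤ proj P01 p0 := inf_le_left
    have hp1ne : p1 ≠ ⊥ := by
      intro hb
      apply hcon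
      have : proj P01 p0 = (proj P01 p0 ⊓ q1) ⊔ (proj P01 p0 ⊓ q1ᶜ) := by
        rw [← inf_sup_left, sup_compl_eq_top, inf_top_eq]
      rw [← hp1def, hb, sup_bot_eq] at this
      rw [this]
      exact inf_le_right
    have hdisj : p0 ⊓ p1 = ⊥ := by
      have h1' : p0 ⊓ p1 ≤ q1 ⊓ q1ᶜ :=
        inf_le_inf (le_proj p0) inf_le_right
      rw [inf_compl_eq_bot] at h1'
      exact le_bot_iff.mp h1'
    set r := proj P01 p1 with hr
    have hrmem : r ∈ P01 := proj_mem h01 p1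
    set p0' := p0 ⊓ r with hp0'def
    have hp0'mem : p0' ∈ P0 := inf_mem h0 hp0 (hsub0 hrmem)
    have hp0'ne : p0' ≠ ⊥ := by
      intro hb
      apply hp1ne
      have h2 : r ⊓ proj P01 p0 = ⊥ :=
        inf_proj_eq_bot h01 hrmem (by rw [inf_comm]; exact hb)
      have : p1 ≤ r ⊓ proj P01 p0 := le_inf (le_proj p1) hp1le
      rw [h2] at this
      exact le_bot_iff.mp this
    have hrle : r ≤ proj P01 p0 := by
      have := proj_mono h01 hp1le
      rwa [proj_of_mem (proj_mem h01 p0)] at this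
    have heq : proj P01 p0' = proj P01 p1 := by
      rw [hp0'def, inf_comm p0 r, proj_inf h01 hrmem, inf_eq_left.mpr hrle]
    have := hiii p0' hp0'mem p1 hp1mem hp0'ne hp1ne heq
    apply this
    have : p0' ⊓ p1 ≤ p0 ⊓ p1 := inf_le_inf_right p1 inf_le_left
    rw [hdisj] at this
    exact le_bot_iff.mp this

end Helpers

/-- The three equivalent formulations of correctness of projections in the
diagram `⟨P_{0∧1}, P_0, P_1, B⟩`. -/
theorem stmt_13 {B : Type u} [CompleteBooleanAlgebra B]
    (P01 P0 P1 : Set B)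
    (h01 : IsCompleteSubalg P01) (h0 : IsCompleteSubalg P0) (h1 : IsCompleteSubalg P1)
    (hsub0 : P01 ⊆ P0) (hsub1 : P01 ⊆ P1) :
    ((∀ p0 ∈ P0, proj P1 p0 = proj P01 p0) ↔
      (∀ p1 ∈ P1, proj P0 p1 = proj P01 p1)) ∧
    ((∀ p0 ∈ P0, proj P1 p0 = proj P01 p0) ↔
      (∀ p0 ∈ P0, ∀ p1 ∈ P1, p0 ≠ ⊥ → p1 ≠ ⊥ →
        proj P01 p0 = proj P01 p1 → p0 ⊓ p1 ≠ ⊥)) := by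
  have k01 := key_lemma h01 h0 h1 hsub0 hsub1
  have k10 := key_lemma h01 h1 h0 hsub1 hsub0
  have hsymm : (∀ p0 ∈ P0, ∀ p1 ∈ P1, p0 ≠ ⊥ → p1 ≠ ⊥ →
        proj P01 p0 = proj P01 p1 → p0 ⊓ p1 ≠ ⊥) ↔
      (∀ p1 ∈ P1, ∀ p0 ∈ P0, p1 ≠ ⊥ → p0 ≠ ⊥ →
        proj P01 p1 = proj P01 p0 → p1 ⊓ p0 ≠ ⊥) := by
    constructor
    · intro h p1 hp1 p0 hp0 hn1 hn0 he
      rw [inf_comm]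
      exact h p0 hp0 p1 hp1 hn0 hn1 he.symm
    · intro h p0 hp0 p1 hp1 hn0 hn1 he
      rw [inf_comm]
      exact h p1 hp1 p0 hp0 hn1 hn0 he.symm
  exact ⟨k01.trans (hsymm.trans k10.symm), k01⟩
end

section
/- Let B be a complete Boolean algebra and let P_{0∧1}, P_0, P_1 be complete subalgebras of B with P_{0∧1} ⊆ P_0 and P_{0∧1} ⊆ P_1. If projections in the diagram ⟨P_{0∧1}, P_0, P_1, B⟩ are correct, i.e., h^B_{P_1}(p_0) = h^{P_0}_{P_{0∧1}}(p_0) for all p_0 ∈ P_0, then P_{0∧1} = P_0 ∩ P_1. -/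
/-- Correctness of projections in the diagram `⟨P_{0∧1}, P_0, P_1, B⟩`
implies `P_{0∧1} = P_0 ∩ P_1`. -/
theorem stmt_14 {B : Type u} [CompleteBooleanAlgebra B]
    (P01 P0 P1 : Set B)
    (h01 : IsCompleteSubalg P01) (h0 : IsCompleteSubalg P0) (h1 : IsCompleteSubalg P1)
    (hsub0 : P01 ⊆ P0) (hsub1 : P01 ⊆ P1)
    (hcorrect : ∀ p0 ∈ P0, proj P1 p0 = proj P01 p0) :
    P01 = P0 ∩ P1 := by
  apply Set.Subset.antisymm
  · intro x hx
    exact ⟨hsub0 hx, hsub1 hx⟩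
  · rintro q ⟨hq0, hq1⟩
    have hself : proj P1 q = q := by
      apply le_antisymm
      · exact sInf_le ⟨hq1, le_rfl⟩
      · exact le_sInf fun p hp => hp.2
    have hmem : proj P01 q ∈ P01 :=
      h01.2.2.2.2 _ (fun p hp => hp.1)
    rw [hcorrect q hq0] at hself
    rw [← hself]
    exact hmem
end
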